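/- arXiv:math/0505196 — 2 statements merged into one kernel-verified Lean document; each statement's English description precedes it below -/
import Mathlib

section
/- Let b:ℝ→ℝ be continuous with locally bounded left derivative (d⁻/dx₁)b(x₁), and let f:ℝ²→ℝ be twice differentiable with continuous second order derivatives in each of the regions x₂ ≤ b(x₁) and x₂ ≥ b(x₁). Then: (a) the function x₁ ↦ ∇₂f(x₁,b(x₁)+) − ∇₂f(x₁,b(x₁)−) is of locally bounded variation; and (b) with f_v(x₁,x₂) = ∫₀^{x₁} (∇₂f(y,b(y)+) − ∇₂f(y,b(y)−))(x₂−b(y))⁺ dy, the functions x₂ ↦ ∇₂⁻f_v(x₁,x₂+b(x₁)) = ∫₀^{x₁}(∇₂f(y,b(y)+)−∇₂f(y,b(y)−))1_{{x₂+b(x₁)>b(y)}}dy and x₂ ↦ ∇₁⁻∇₂⁻f_v(x₁,x₂+b(x₁)) = (∇₂f(x₁,b(x₁)+)−∇₂f(x₁,b(x₁)−))1_{{x₂>0}} are of locally bounded variation in x₂, and ∇₁⁻f_v(x₁,x₂+b(x₁)) = (∇₂f(x₁,b(x₁)+)−∇₂f(x₁,b(x₁)−))x₂⁺ and ∇₁⁻∇₂⁻f_v(x₁,x₂+b(x₁))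 are of locally bounded variation in x₁. -/
open MeasureTheory Filter Set

noncomputable section

namespace GIF

/-- Convergence in probability of a sequence of real random variables. -/
def TendstoInProb {Ω : Type*} [MeasurableSpace Ω] (μ : Measure Ω)
    (Y : ℕ → Ω → ℝ) (Z : Ω → ℝ) : Prop :=
  ∀ ε : ℝ, 0 < ε →
    Tendsto (fun n => μ {ω | ε ≤ |Y n ω - Z ω|}) atTop (nhds 0)

/-- A finite monotone grid of real numbers; only the first `n` steps matter. -/
structure Grid where
  n : ℕ
  pts : ℕ → ℝ
  mono : Monotone pts

/-- All steps of the grid have length at most `δ`. -/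
def Grid.MeshLE (P : Grid) (δ : ℝ) : Prop :=
  ∀ k, k < P.n → P.pts (k + 1) - P.pts k ≤ δ

/-- The grid is a partition of `[a,b]`. -/
def Grid.IsPartition (P : Grid) (a b : ℝ) : Prop :=
  P.pts 0 = a ∧ ∀ k, P.n ≤ k → P.pts k = b

/-- Mixed second-order difference of a two-variable function over
`[s₁,s₂] × [x₁,x₂]`. -/
def mdiff2 (F : ℝ → ℝ → ℝ) (s₁ s₂ x₁ x₂ : ℝ) : ℝ :=
  F s₂ x₂ - F s₂ x₁ - F s₁ x₂ + F s₁ x₁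

/-- Mixed third-order difference of a three-variable function. -/
def mdiff3 (F : ℝ → ℝ → ℝ → ℝ) (s₁ s₂ x₁ x₂ y₁ y₂ : ℝ) : ℝ :=
  mdiff2 (fun x y => F s₂ x y) x₁ x₂ y₁ y₂ - mdiff2 (fun x y => F s₁ x y) x₁ x₂ y₁ y₂

/-- Bounded variation (in the two-parameter, mixed-difference sense) on `I × J`. -/
def BV2On (F : ℝ → ℝ → ℝ) (I J : Set ℝ) : Prop :=
  ∃ C : ℝ, ∀ P Q : Grid, (∀ k, k ≤ P.n → P.pts k ∈ I) → (∀ k, k ≤ Q.n → Q.pts k ∈ J) →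
    ∑ i ∈ Finset.range P.n, ∑ j ∈ Finset.range Q.n,
      |mdiff2 F (P.pts i) (P.pts (i + 1)) (Q.pts j) (Q.pts (j + 1))| ≤ C

/-- Bounded variation (three-parameter, mixed-difference sense) on `I × J × K`. -/
def BV3On (F : ℝ → ℝ → ℝ → ℝ) (I J K : Set ℝ) : Prop :=
  ∃ C : ℝ, ∀ P Q R : Grid, (∀ k, k ≤ P.n → P.pts k ∈ I) → (∀ k, k ≤ Q.n → Q.pts k ∈ J) →
      (∀ k, k ≤ R.n → R.pts k ∈ K) →
    ∑ i ∈ Finset.range P.n, ∑ j ∈ Finset.range Q.n, ∑ l ∈ Finset.range R.n,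
      |mdiff3 F (P.pts i) (P.pts (i + 1)) (Q.pts j) (Q.pts (j + 1))
        (R.pts l) (R.pts (l + 1))| ≤ C

/-- Joint left-continuity of a three-variable function. -/
def LeftCts3 (F : ℝ → ℝ → ℝ → ℝ) : Prop :=
  ∀ s x y : ℝ,
    Tendsto (fun p : ℝ × ℝ × ℝ => F p.1 p.2.1 p.2.2)
      (nhdsWithin (s, x, y) {p : ℝ × ℝ × ℝ | p.1 ≤ s ∧ p.2.1 ≤ x ∧ p.2.2 ≤ y})
      (nhds (F s x y))

/-- Local boundedness of a three-variable function. -/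
def LocBdd3 (F : ℝ → ℝ → ℝ → ℝ) : Prop :=
  ∀ R : ℝ, 0 < R → ∃ C : ℝ, ∀ s x y : ℝ, |s| ≤ R → |x| ≤ R → |y| ≤ R → |F s x y| ≤ C

variable {Ω : Type*}

/-- `M` is a martingale on the time interval `[0,T]` for the filtration `ℱ`. -/
def MartingaleOn [m0 : MeasurableSpace Ω] (μ : Measure Ω) (ℱ : Filtration ℝ m0)
    (M : ℝ → Ω → ℝ) (T : ℝ) : Prop :=
  Adapted ℱ M ∧ (∀ t : ℝ, Integrable (M t) μ) ∧
    ∀ s t : ℝ, 0 ≤ s → s ≤ t → t ≤ T → μ[M t|ℱ s] =ᵐ[μ] M s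

/-- `M` is a continuous local martingale (with localizing sequence of
stopping times). -/
def IsContLocalMartingale [m0 : MeasurableSpace Ω] (μ : Measure Ω) (ℱ : Filtration ℝ m0)
    (M : ℝ → Ω → ℝ) : Prop :=
  Adapted ℱ M ∧ (∀ ω, Continuous fun t => M t ω) ∧
    ∃ τ : ℕ → Ω → ℝ,
      (∀ n, IsStoppingTime ℱ (fun ω => ((τ n ω : ℝ) : WithTop ℝ))) ∧
      (∀ ω, Tendsto (fun n => τ n ω) atTop atTop) ∧
      ∀ n, Martingale (fun t ω => M (min t (τ n ω)) ω) ℱ μ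

/-- Left-endpoint Riemann sum of `g` against the increments of `Z` along a grid. -/
def itoSum (g Z : ℝ → Ω → ℝ) (P : Grid) (ω : Ω) : ℝ :=
  ∑ k ∈ Finset.range P.n, g (P.pts k) ω * (Z (P.pts (k + 1)) ω - Z (P.pts k) ω)

/-- `I` is the Itô integral `∫₀^· g dZ`: left-endpoint Riemann sums along
partitions of `[0,t]` with vanishing mesh converge to `I t` in probability. -/
def IsItoIntegral [MeasurableSpace Ω] (μ : Measure Ω) (g Z : ℝ → Ω → ℝ)
    (I : ℝ → Ω → ℝ) : Prop :=
  (∀ ω, I 0 ω = 0) ∧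
  ∀ t : ℝ, 0 ≤ t → ∀ πs : ℕ → Grid,
    (∀ m, (πs m).IsPartition 0 t) →
    (∀ δ : ℝ, 0 < δ → ∀ᶠ m in atTop, (πs m).MeshLE δ) →
    TendstoInProb μ (fun m => itoSum g Z (πs m)) (I t)

/-- Sum of products of increments of `M` and `N` along a grid. -/
def covSum (M N : ℝ → Ω → ℝ) (P : Grid) (ω : Ω) : ℝ :=
  ∑ k ∈ Finset.range P.n,
    (M (P.pts (k + 1)) ω - M (P.pts k) ω) * (N (P.pts (k + 1)) ω - N (P.pts k) ω)

/-- `C` is the (cross-)quadratic variation `⟨M,N⟩`. -/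
def IsCovariation [MeasurableSpace Ω] (μ : Measure Ω) (M N C : ℝ → Ω → ℝ) : Prop :=
  (∀ ω, C 0 ω = 0) ∧ (∀ ω, Continuous fun t => C t ω) ∧
  ∀ t : ℝ, 0 ≤ t → ∀ πs : ℕ → Grid,
    (∀ m, (πs m).IsPartition 0 t) →
    (∀ δ : ℝ, 0 < δ → ∀ᶠ m in atTop, (πs m).MeshLE δ) →
    TendstoInProb μ (fun m => covSum M N (πs m)) (C t)

/-- `ν ω` is the Lebesgue–Stieltjes measure of the nondecreasing process
`s ↦ A s ω`. -/
def IsStieltjesMeasOf (A : ℝ → Ω → ℝ) (ν : Ω → Measure ℝ) : Prop :=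
  (∀ ω, Monotone fun s => A s ω) ∧
  ∀ ω, ∀ a b : ℝ, a ≤ b → ν ω (Ioc a b) = ENNReal.ofReal (A b ω - A a ω)

/-- `L` is the local time of `X`, where `ν ω` is the measure `d⟨M⟩(·)(ω)` of the
quadratic variation of the martingale part of `X`. -/
def IsLocalTime [MeasurableSpace Ω] (μ : Measure Ω) (X : ℝ → Ω → ℝ)
    (ν : Ω → Measure ℝ) (L : ℝ → ℝ → Ω → ℝ) : Prop :=
  ∀ t a : ℝ, 0 ≤ t → ∀ᵐ ω ∂μ,
    Tendsto (fun ε : ℝ =>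
        (1 / (2 * ε)) * (ν ω {s | s ∈ Icc 0 t ∧ X s ω ∈ Ico a (a + ε)}).toReal)
      (nhdsWithin 0 (Ioi 0)) (nhds (L t a ω))

/-- `X = X 0 + M + V` is a continuous semimartingale. -/
def IsContSemimartingale [m0 : MeasurableSpace Ω] (μ : Measure Ω) (ℱ : Filtration ℝ m0)
    (X M V : ℝ → Ω → ℝ) : Prop :=
  (∀ t ω, X t ω = X 0 ω + M t ω + V t ω) ∧
  (∀ ω, M 0 ω = 0) ∧ (∀ ω, V 0 ω = 0) ∧
  IsContLocalMartingale μ ℱ M ∧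
  Adapted ℱ V ∧ (∀ ω, Continuous fun t => V t ω) ∧
  (∀ ω, LocallyBoundedVariationOn (fun t => V t ω) univ)

/-- The data of a simple two-parameter function
`g(s,x,ω) = ∑_{j,i} e j i ω • 1_{(t j, t (j+1)]}(s) 1_{(x i, x (i+1)]}(x)`
with `e j i` being `ℱ (t j)`-measurable. -/
structure SimpleData [m0 : MeasurableSpace Ω] (ℱ : Filtration ℝ m0) where
  nt : ℕ
  nx : ℕ
  t : ℕ → ℝ
  x : ℕ → ℝ
  e : ℕ → ℕ → Ω → ℝ
  ht : StrictMono t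
  hx : StrictMono x
  he : ∀ j i, StronglyMeasurable[ℱ (t j)] (e j i)

/-- The simple function associated to the data. -/
def SimpleData.toFun [m0 : MeasurableSpace Ω] {ℱ : Filtration ℝ m0} (S : SimpleData ℱ) :
    ℝ → ℝ → Ω → ℝ := fun s y ω =>
  ∑ j ∈ Finset.range S.nt, ∑ i ∈ Finset.range S.nx,
    if S.t j < s ∧ s ≤ S.t (j + 1) ∧ S.x i < y ∧ y ≤ S.x (i + 1) then S.e j i ω else 0

/-- The stochastic Lebesgue–Stieltjes integral `I_t` of a simple function
against `h`. -/
def SimpleData.I [m0 : MeasurableSpace Ω] {ℱ : Filtration ℝ m0} (S : SimpleData ℱ)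
    (h : ℝ → ℝ → Ω → ℝ) : ℝ → Ω → ℝ := fun T ω =>
  ∑ j ∈ Finset.range S.nt, ∑ i ∈ Finset.range S.nx,
    S.e j i ω *
      (h (min (S.t (j + 1)) T) (S.x (i + 1)) ω - h (min (S.t j) T) (S.x (i + 1)) ω
        - h (min (S.t (j + 1)) T) (S.x i) ω + h (min (S.t j) T) (S.x i) ω)

/-- The data of an element `h ∈ 𝒱₂` on the horizon `[0,T]`, together with its
cross-variations `F s x y = ⟨h(·,x), h(·,y)⟩_s` and the associated (random)
signed product measure on `[0,T] × ℝ²`, given by its two parts `νp, νm`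
(coming from a decomposition of `F` into two increasing functions);
`νp + νm` plays the role of the total-variation measure `|d⟨h(x),h(y)⟩|`. -/
structure V2Data [m0 : MeasurableSpace Ω] (μ : Measure Ω) (ℱ : Filtration ℝ m0)
    (T : ℝ) where
  h : ℝ → ℝ → Ω → ℝ
  F : ℝ → ℝ → ℝ → Ω → ℝ
  νp : Ω → Measure (ℝ × ℝ × ℝ)
  νm : Ω → Measure (ℝ × ℝ × ℝ)
  meas : Measurable fun p : (ℝ × ℝ) × Ω => h p.1.1 p.1.2 p.2
  mart : ∀ x : ℝ, MartingaleOn μ ℱ (fun s => h s x) T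
  contPaths : ∀ (x : ℝ) (ω : Ω), Continuous fun s => h s x ω
  sqInt : ∀ s x : ℝ, MemLp (h s x) 2 μ
  covar : ∀ x y : ℝ, IsCovariation μ (fun s => h s x) (fun s => h s y)
    (fun s ω => F s x y ω)
  leftCts : ∀ ω, LeftCts3 fun s x y => F s x y ω
  bv3 : ∀ (ω : Ω) (R : ℝ), 0 < R →
    BV3On (fun s x y => F s x y ω) (Icc 0 T) (Icc (-R) R) (Icc (-R) R)
  locFinp : ∀ ω, IsLocallyFiniteMeasure (νp ω)
  locFinm : ∀ ω, IsLocallyFiniteMeasure (νm ω)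
  box : ∀ (ω : Ω) (s₁ s₂ x₁ x₂ y₁ y₂ : ℝ), s₁ ≤ s₂ → x₁ ≤ x₂ → y₁ ≤ y₂ →
    (νp ω (Ico s₁ s₂ ×ˢ (Ico x₁ x₂ ×ˢ Ico y₁ y₂))).toReal
      - (νm ω (Ico s₁ s₂ ×ˢ (Ico x₁ x₂ ×ˢ Ico y₁ y₂))).toReal
      = mdiff3 (fun s x y => F s x y ω) s₁ s₂ x₁ x₂ y₁ y₂

/-- `g ∈ 𝒱₃(h)`: jointly measurable, adapted, compactly supported in the space
variable, with `E ∫₀^T ∫_{ℝ²} |g(s,x) g(s,y)| |d⟨h(x),h(y)⟩| < ∞`. -/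
def IsV3 [m0 : MeasurableSpace Ω] {μ : Measure Ω} {ℱ : Filtration ℝ m0} {T : ℝ}
    (H : V2Data μ ℱ T) (g : ℝ → ℝ → Ω → ℝ) : Prop :=
  Measurable (fun p : (ℝ × ℝ) × Ω => g p.1.1 p.1.2 p.2) ∧
  (∀ x : ℝ, Adapted ℱ fun s => g s x) ∧
  (∃ R : ℝ, ∀ (s x : ℝ) (ω : Ω), R ≤ |x| → g s x ω = 0) ∧
  (∫⁻ ω, (∫⁻ p in Ico (0 : ℝ) T ×ˢ (univ : Set (ℝ × ℝ)),
      ENNReal.ofReal |g p.1 p.2.1 ω * g p.1 p.2.2 ω| ∂(H.νp ω + H.νm ω)) ∂μ) < ⊤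

/-- `φ m n → g` in the sense
`E ∫₀^T ∫_{ℝ²} |(g-φ m n)(s,x) (g-φ m' n')(s,y)| |d⟨h(x),h(y)⟩| → 0` as
`m, n, m', n' → ∞`. -/
def ApproxTo [m0 : MeasurableSpace Ω] {μ : Measure Ω} {ℱ : Filtration ℝ m0} {T : ℝ}
    (H : V2Data μ ℱ T) (g : ℝ → ℝ → Ω → ℝ) (φ : ℕ → ℕ → ℝ → ℝ → Ω → ℝ) : Prop :=
  ∀ ε : ℝ, 0 < ε → ∃ N : ℕ, ∀ m n m' n' : ℕ, N ≤ m → N ≤ n → N ≤ m' → N ≤ n' →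
    (∫⁻ ω, (∫⁻ p in Ico (0 : ℝ) T ×ˢ (univ : Set (ℝ × ℝ)),
        ENNReal.ofReal |(g p.1 p.2.1 ω - φ m n p.1 p.2.1 ω) *
          (g p.1 p.2.2 ω - φ m' n' p.1 p.2.2 ω)| ∂(H.νp ω + H.νm ω)) ∂μ)
      ≤ ENNReal.ofReal ε

/-- `I` is the stochastic Lebesgue–Stieltjes integral `∫₀^·∫_ℝ g dh`:
the `ℳ₂`-limit (i.e. `L²`-limit at each time) of the integrals of a sequence of
simple functions approximating `g`. -/
def IsSLSIntegral [m0 : MeasurableSpace Ω] {μ : Measure Ω} {ℱ : Filtration ℝ m0} {T : ℝ}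
    (H : V2Data μ ℱ T) (g : ℝ → ℝ → Ω → ℝ) (I : ℝ → Ω → ℝ) : Prop :=
  ∃ φ : ℕ → ℕ → SimpleData ℱ,
    (∀ m n, IsV3 H (φ m n).toFun) ∧
    ApproxTo H g (fun m n => (φ m n).toFun) ∧
    ∀ t : ℝ, 0 ≤ t → t ≤ T → ∀ ε : ℝ, 0 < ε → ∃ N : ℕ, ∀ m n : ℕ, N ≤ m → N ≤ n →
      (∫ ω, (I t ω - (φ m n).I H.h t ω) ^ 2 ∂μ) ≤ ε

/-- Condition (i). -/
def CondI (f : ℝ → ℝ → ℝ → ℝ) : Prop :=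
  LeftCts3 f ∧ LocBdd3 f ∧
  ∀ x₁ x₂ : ℝ,
    Tendsto (fun p : ℝ × ℝ × ℝ => f p.1 p.2.1 p.2.2)
      (nhdsWithin (0, x₁, x₂) {p : ℝ × ℝ × ℝ | 0 ≤ p.1 ∧ p.2.1 ≤ x₁ ∧ p.2.2 ≤ x₂})
      (nhds (f 0 x₁ x₂))

/-- Condition (ii): `ft = ∂⁻f/∂t`, `f1 = ∇₁⁻f`, `f2 = ∇₂⁻f`. -/
def CondII (f ft f1 f2 : ℝ → ℝ → ℝ → ℝ) : Prop :=
  (∀ t x₁ x₂ : ℝ, 0 < t → HasDerivWithinAt (fun s => f s x₁ x₂) (ft t x₁ x₂) (Iio t) t) ∧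
  (∀ t x₁ x₂ : ℝ, 0 ≤ t → HasDerivWithinAt (fun y => f t y x₂) (f1 t x₁ x₂) (Iio x₁) x₁) ∧
  (∀ t x₁ x₂ : ℝ, 0 ≤ t → HasDerivWithinAt (fun y => f t x₁ y) (f2 t x₁ x₂) (Iio x₂) x₂) ∧
  LeftCts3 f1 ∧ LeftCts3 f2 ∧ LocBdd3 f1 ∧ LocBdd3 f2

/-- Condition (iii): `∇ᵢ⁻f` is of locally bounded variation in `xᵢ`. -/
def CondIII (f1 f2 : ℝ → ℝ → ℝ → ℝ) : Prop :=
  (∀ t x₂ a b : ℝ, BoundedVariationOn (fun y => f1 t y x₂) (Icc a b)) ∧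
  (∀ t x₁ a b : ℝ, BoundedVariationOn (fun y => f2 t x₁ y) (Icc a b))

/-- Condition (iv): `f1t = ∂⁻/∂t ∇₁⁻f`, `f2t = ∂⁻/∂t ∇₂⁻f`, `f12 = ∇₁⁻∇₂⁻f`. -/
def CondIV (f1 f2 f1t f2t f12 : ℝ → ℝ → ℝ → ℝ) : Prop :=
  (∀ t x₁ x₂ : ℝ, 0 < t → HasDerivWithinAt (fun s => f1 s x₁ x₂) (f1t t x₁ x₂) (Iio t) t) ∧
  (∀ t x₁ x₂ : ℝ, 0 < t → HasDerivWithinAt (fun s => f2 s x₁ x₂) (f2t t x₁ x₂) (Iio t) t) ∧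
  (∀ t x₁ x₂ : ℝ, 0 ≤ t → HasDerivWithinAt (fun y => f1 t x₁ y) (f12 t x₁ x₂) (Iio x₂) x₂) ∧
  LeftCts3 f1t ∧ LeftCts3 f2t ∧ LeftCts3 f12 ∧ LocBdd3 f1t ∧ LocBdd3 f2t ∧ LocBdd3 f12

/-- Condition (v): `∇₁⁻∇₂⁻f` is of locally bounded variation in `(t,x₁)` and in
`(t,x₂)`, and at `t = 0` of locally bounded variation in `x₁` and in `x₂`. -/
def CondV (f12 : ℝ → ℝ → ℝ → ℝ) : Prop :=
  (∀ x₂ R : ℝ, 0 < R → BV2On (fun t x₁ => f12 t x₁ x₂) (Icc 0 R) (Icc (-R) R)) ∧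
  (∀ x₁ R : ℝ, 0 < R → BV2On (fun t x₂ => f12 t x₁ x₂) (Icc 0 R) (Icc (-R) R)) ∧
  (∀ x₂ a b : ℝ, BoundedVariationOn (fun x₁ => f12 0 x₁ x₂) (Icc a b)) ∧
  (∀ x₁ a b : ℝ, BoundedVariationOn (fun x₂ => f12 0 x₁ x₂) (Icc a b))

end GIF

open MeasureTheory Filter Set GIF


section Statement13Aux

open Topology

private lemma evar_pair13 (f g : ℝ → ℝ) (s : Set ℝ) :
    eVariationOn (fun x => (f x, g x)) s ≤ eVariationOn f s + eVariationOn g s := by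
  apply iSup_le
  rintro ⟨n, u, hu, us⟩
  calc ∑ i ∈ Finset.range n,
        edist ((fun x => (f x, g x)) (u (i + 1))) ((fun x => (f x, g x)) (u i))
      ≤ ∑ i ∈ Finset.range n,
        (edist (f (u (i + 1))) (f (u i)) + edist (g (u (i + 1))) (g (u i))) := by
        refine Finset.sum_le_sum fun i _ => ?_
        rw [Prod.edist_eq]
        exact max_le le_self_add le_add_self
    _ = (∑ i ∈ Finset.range n, edist (f (u (i + 1))) (f (u i)))
        + ∑ i ∈ Finset.range n, edist (g (u (i + 1))) (g (u i)) := Finset.sum_add_distrib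
    _ ≤ eVariationOn f s + eVariationOn g s :=
        add_le_add (eVariationOn.sum_le (f := f) (n := n) hu us) (eVariationOn.sum_le (f := g) (n := n) hu us)

set_option maxHeartbeats 1000000 in
private lemma lbv_sub13 {f g : ℝ → ℝ} {s : Set ℝ} (hf : LocallyBoundedVariationOn f s)
    (hg : LocallyBoundedVariationOn g s) :
    LocallyBoundedVariationOn (fun x => f x - g x) s := by
  have hpair : LocallyBoundedVariationOn (fun x => (f x, g x)) s := by
    intro a c ha hc
    have h := evar_pair13 f g (s ∩ Icc a c)
    have h1 : eVariationOn f (s ∩ Icc a c) ≠ ⊤ := hf a c ha hc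
    have h2 : eVariationOn g (s ∩ Icc a c) ≠ ⊤ := hg a c ha hc
    exact ne_top_of_le_ne_top (ENNReal.add_ne_top.2 ⟨h1, h2⟩) h
  have hlip : LipschitzWith (1 + 1) (fun p : ℝ × ℝ => p.1 - p.2) :=
    LipschitzWith.prod_fst.sub (LipschitzWith.prod_snd (α := ℝ) (β := ℝ))
  have h := hlip.comp_locallyBoundedVariationOn hpair
  exact h

private lemma lbv_mul_const13 {f : ℝ → ℝ} {s : Set ℝ} (c : ℝ)
    (hf : LocallyBoundedVariationOn f s) :
    LocallyBoundedVariationOn (fun x => f x * c) s := by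
  have hlip : LipschitzWith ‖c‖₊ (fun t : ℝ => t * c) := by
    apply LipschitzWith.of_dist_le_mul
    intro x y
    simp only [Real.dist_eq, ← sub_mul, abs_mul, coe_nnnorm, Real.norm_eq_abs]
    rw [mul_comm]
  exact hlip.comp_locallyBoundedVariationOn hf

private lemma lbv_of_antitone13 {f : ℝ → ℝ} (hf : Antitone f) :
    LocallyBoundedVariationOn f univ := by
  have h1 : Monotone fun x => f x * (-1) := fun x y h => by
    simp only [mul_neg_one]; exact neg_le_neg (hf h)
  have h2 := lbv_mul_const13 (-1) (h1.monotoneOn univ).locallyBoundedVariationOn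
  have : (fun x => f x * (-1) * (-1)) = f := by funext x; ring
  rwa [this] at h2

private lemma left_deriv_bound13 (b b1 : ℝ → ℝ) (hb : Continuous b)
    (hb1 : ∀ x, HasDerivWithinAt b (b1 x) (Iio x) x) {a c C : ℝ}
    (hC : ∀ x ∈ Icc a c, |b1 x| ≤ C) :
    ∀ x ∈ Icc a c, ∀ y ∈ Icc a c, x ≤ y → |b y - b x| ≤ C * (y - x) := by
  intro x hx y hy hxy
  set g : ℝ → ℝ := fun t => b (x + y - t) with hg
  have key : ∀ t ∈ Ico x y, HasDerivWithinAt g (b1 (x + y - t) * (-1)) (Ici t) t := by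
    intro t ht
    have hinner : HasDerivWithinAt (fun t : ℝ => x + y - t) (-1) (Ioi t) t :=
      ((hasDerivAt_id t).const_sub (x + y)).hasDerivWithinAt
    have hmaps : MapsTo (fun t : ℝ => x + y - t) (Ioi t) (Iio (x + y - t)) := by
      intro u hu
      simp only [mem_Ioi] at hu
      simp only [mem_Iio]
      linarith
    exact (HasDerivWithinAt.comp t (hb1 (x + y - t)) hinner hmaps).Ici_of_Ioi
  have cont : ContinuousOn g (Icc x y) :=
    (hb.comp (continuous_const.sub continuous_id)).continuousOn
  have bound : ∀ t ∈ Ico x y, ‖b1 (x + y - t) * (-1)‖ ≤ C := by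
    intro t ht
    rw [Real.norm_eq_abs, abs_mul, abs_neg, abs_one, mul_one]
    exact hC _ ⟨by linarith [hx.1, ht.2], by linarith [hy.2, ht.1]⟩
  have h := norm_image_sub_le_of_norm_deriv_right_le_segment cont key bound y
    (right_mem_Icc.2 hxy)
  have hgx : g x = b y := by simp [hg]
  have hgy : g y = b x := by simp [hg]
  rw [hgx, hgy, Real.norm_eq_abs, abs_sub_comm] at h
  exact h

private lemma b_lipschitzOn13 (b b1 : ℝ → ℝ) (hb : Continuous b)
    (hb1 : ∀ x, HasDerivWithinAt b (b1 x) (Iio x) x)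
    (hb1bdd : ∀ R : ℝ, 0 < R → ∃ C : ℝ, ∀ x : ℝ, |x| ≤ R → |b1 x| ≤ C)
    (a c : ℝ) : ∃ K : NNReal, LipschitzOnWith K b (Icc a c) := by
  set R : ℝ := max |a| |c| + 1 with hR
  obtain ⟨C, hC⟩ := hb1bdd R (by positivity)
  have hmem : ∀ x ∈ Icc a c, |x| ≤ R := by
    intro x hx
    rw [abs_le]
    constructor
    · have := neg_abs_le a; have := le_max_left |a| |c|; linarith [hx.1]
    · have := le_abs_self c; have := le_max_right |a| |c|; linarith [hx.2]
  have key := left_deriv_bound13 b b1 hb hb1 (fun x hx => hC x (hmem x hx))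
  refine ⟨(max C 0).toNNReal, ?_⟩
  rw [lipschitzOnWith_iff_dist_le_mul]
  intro x hx y hy
  have hcoe : ((max C 0).toNNReal : ℝ) = max C 0 := Real.coe_toNNReal _ (le_max_right _ _)
  rw [hcoe, Real.dist_eq, Real.dist_eq]
  rcases le_total x y with h | h
  · have := key x hx y hy h
    have h2 : |x - y| = y - x := by rw [abs_sub_comm]; exact abs_of_nonneg (by linarith)
    rw [abs_sub_comm, h2]
    calc |b y - b x| ≤ C * (y - x) := this
      _ ≤ max C 0 * (y - x) := mul_le_mul_of_nonneg_right (le_max_left _ _) (by linarith)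
  · have := key y hy x hx h
    have h2 : |x - y| = x - y := abs_of_nonneg (by linarith)
    rw [h2]
    calc |b x - b y| ≤ C * (x - y) := this
      _ ≤ max C 0 * (x - y) := mul_le_mul_of_nonneg_right (le_max_left _ _) (by linarith)

private lemma cd_partial13 (G : ℝ → ℝ → ℝ) (hG : ContDiff ℝ 2 fun p : ℝ × ℝ => G p.1 p.2) :
    ContDiff ℝ 1 (fun p : ℝ × ℝ => deriv (fun y => G p.1 y) p.2) := by
  have huncurry : ContDiff ℝ 2 (Function.uncurry fun (p : ℝ × ℝ) (y : ℝ) => G p.1 y) :=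
    hG.comp ((contDiff_fst.fst).prodMk contDiff_snd)
  have h1 : ContDiff ℝ 1 fun p : ℝ × ℝ =>
      fderiv ℝ (fun y => G p.1 y) p.2 ((fun _ : ℝ × ℝ => (1 : ℝ)) p) :=
    ContDiff.fderiv_apply huncurry contDiff_snd contDiff_const (by norm_num)
  have heq : (fun p : ℝ × ℝ => deriv (fun y => G p.1 y) p.2)
      = fun p : ℝ × ℝ => fderiv ℝ (fun y => G p.1 y) p.2 1 := by
    funext p; rw [fderiv_apply_one_eq_deriv]
  rw [heq]; exact h1

private lemma lbv_comp13 (b b1 : ℝ → ℝ) (hb : Continuous b)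
    (hb1 : ∀ x : ℝ, HasDerivWithinAt b (b1 x) (Iio x) x)
    (hb1bdd : ∀ R : ℝ, 0 < R → ∃ C : ℝ, ∀ x : ℝ, |x| ≤ R → |b1 x| ≤ C)
    (H : ℝ × ℝ → ℝ) (hH : ContDiff ℝ 1 H) (D : ℝ → ℝ)
    (hDeq : ∀ x, D x = H (x, b x)) :
    LocallyBoundedVariationOn D univ := by
  intro a c _ _
  rw [univ_inter]
  obtain ⟨K, hK⟩ := b_lipschitzOn13 b b1 hb hb1 hb1bdd a c
  set φ : ℝ → ℝ × ℝ := fun x => (x, b x) with hφ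
  have hφlip : LipschitzOnWith (K + 1) φ (Icc a c) := by
    rw [lipschitzOnWith_iff_dist_le_mul]
    intro x hx y hy
    have h1 := (lipschitzOnWith_iff_dist_le_mul.1 hK) x hx y hy
    rw [Prod.dist_eq]
    have hd : (0 : ℝ) ≤ dist x y := dist_nonneg
    push_cast
    refine max_le (by nlinarith [K.coe_nonneg]) (by nlinarith [K.coe_nonneg])
  have hid : BoundedVariationOn (id : ℝ → ℝ) (Icc a c) := by
    have := (monotone_id.monotoneOn univ).locallyBoundedVariationOn
      (f := (id : ℝ → ℝ)) a c (mem_univ a) (mem_univ c)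
    rwa [univ_inter] at this
  have hφbv : BoundedVariationOn φ (Icc a c) :=
    hφlip.comp_boundedVariationOn (mapsTo_id _) hid
  obtain ⟨Mb, hMb⟩ : ∃ Mb : ℝ, ∀ x ∈ Icc a c, ‖b x‖ ≤ Mb :=
    isCompact_Icc.exists_bound_of_continuousOn hb.continuousOn
  set T : Set (ℝ × ℝ) := Icc a c ×ˢ Icc (-Mb) Mb with hT
  have hTconv : Convex ℝ T := (convex_Icc a c).prod (convex_Icc _ _)
  have hTcomp : IsCompact T := isCompact_Icc.prod isCompact_Icc
  obtain ⟨M, hM⟩ : ∃ M : ℝ, ∀ p ∈ T, ‖fderiv ℝ H p‖ ≤ M :=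
    hTcomp.exists_bound_of_continuousOn ((hH.continuous_fderiv one_ne_zero).continuousOn)
  have hHlip : LipschitzOnWith (max M 0).toNNReal H T := by
    apply hTconv.lipschitzOnWith_of_nnnorm_fderiv_le
      (fun p _ => hH.differentiable one_ne_zero p)
    intro p hp
    rw [← norm_toNNReal]
    exact Real.toNNReal_mono ((hM p hp).trans (le_max_left _ _))
  have hmaps : MapsTo φ (Icc a c) T := by
    intro x hx
    refine ⟨hx, ?_⟩
    have := hMb x hx
    rw [Real.norm_eq_abs, abs_le] at this
    exact this
  have hbv : BoundedVariationOn (H ∘ φ) (Icc a c) :=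
    hHlip.comp_boundedVariationOn hmaps hφbv
  have heq : D = H ∘ φ := by funext x; exact hDeq x
  rwa [heq]

end Statement13Aux

open Topology

/-- Let `b : ℝ → ℝ` be continuous with locally bounded left
derivative and let `f : ℝ² → ℝ` be `C²` (extendably) in each of the regions
`x₂ ≤ b(x₁)` and `x₂ ≥ b(x₁)` (with `f = F` below the curve and `f = G` above).
Writing `D(x₁) = ∇₂f(x₁,b(x₁)+) - ∇₂f(x₁,b(x₁)-)` and
`fv(x₁,x₂) = ∫₀^{x₁} D(y) (x₂-b(y))⁺ dy`, then:
(a) `D` is of locally bounded variation;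
(b) `∇₂⁻fv(x₁,x₂+b(x₁)) = ∫₀^{x₁} D(y) 1_{x₂+b(x₁)>b(y)} dy` and
`∇₁⁻∇₂⁻fv(x₁,x₂+b(x₁)) = D(x₁) 1_{x₂>0}` are of locally bounded variation in
`x₂`, and `∇₁⁻fv(x₁,x₂+b(x₁)) = D(x₁) x₂⁺` and `∇₁⁻∇₂⁻fv(x₁,x₂+b(x₁))` are of
locally bounded variation in `x₁`. -/
theorem statement_13
    (b : ℝ → ℝ) (hb : Continuous b)
    (b1 : ℝ → ℝ) (hb1 : ∀ x : ℝ, HasDerivWithinAt b (b1 x) (Iio x) x)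
    (hb1bdd : ∀ R : ℝ, 0 < R → ∃ C : ℝ, ∀ x : ℝ, |x| ≤ R → |b1 x| ≤ C)
    (f F G : ℝ → ℝ → ℝ)
    (hF : ContDiff ℝ 2 fun p : ℝ × ℝ => F p.1 p.2)
    (hG : ContDiff ℝ 2 fun p : ℝ × ℝ => G p.1 p.2)
    (hfF : ∀ x₁ x₂ : ℝ, x₂ ≤ b x₁ → f x₁ x₂ = F x₁ x₂)
    (hfG : ∀ x₁ x₂ : ℝ, b x₁ ≤ x₂ → f x₁ x₂ = G x₁ x₂)
    -- `D x₁ = ∇₂f(x₁, b(x₁)+) - ∇₂f(x₁, b(x₁)-)`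
    (D : ℝ → ℝ)
    (hD : ∀ x₁ : ℝ,
      D x₁ = deriv (fun y => G x₁ y) (b x₁) - deriv (fun y => F x₁ y) (b x₁))
    -- `fv(x₁,x₂) = ∫₀^{x₁} D(y) (x₂ - b(y))⁺ dy`
    (fv : ℝ → ℝ → ℝ)
    (hfv : ∀ x₁ x₂ : ℝ, fv x₁ x₂ = ∫ y in (0 : ℝ)..x₁, D y * max (x₂ - b y) 0) :
    -- (a) `D` is of locally bounded variation
    LocallyBoundedVariationOn D univ ∧
    -- (b) the formulas for the left derivatives of `fv` hold...
    (∀ x₁ x₂ : ℝ, HasDerivWithinAt (fun z => fv x₁ z)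
      (∫ y in (0 : ℝ)..x₁, D y * (if b y < x₂ then 1 else 0)) (Iio x₂) x₂) ∧
    (∀ x₁ x₂ : ℝ, HasDerivWithinAt (fun u => fv u (x₂ + b x₁))
      (D x₁ * max x₂ 0) (Iio x₁) x₁) ∧
    -- ... `x₂ ↦ ∇₂⁻fv(x₁, x₂ + b(x₁))` is of locally bounded variation in `x₂`
    (∀ x₁ : ℝ, LocallyBoundedVariationOn
      (fun x₂ => ∫ y in (0 : ℝ)..x₁, D y * (if b y < x₂ + b x₁ then 1 else 0)) univ) ∧
    -- ... `x₂ ↦ ∇₁⁻∇₂⁻fv(x₁, x₂ + b(x₁)) = D(x₁) 1_{x₂ > 0}` is of locally bounded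
    -- variation in `x₂`
    (∀ x₁ : ℝ, LocallyBoundedVariationOn
      (fun x₂ : ℝ => D x₁ * (if 0 < x₂ then 1 else 0)) univ) ∧
    -- ... `x₁ ↦ ∇₁⁻fv(x₁, x₂ + b(x₁)) = D(x₁) x₂⁺` is of locally bounded variation
    (∀ x₂ : ℝ, LocallyBoundedVariationOn (fun x₁ => D x₁ * max x₂ 0) univ) ∧
    -- ... `x₁ ↦ ∇₁⁻∇₂⁻fv(x₁, x₂ + b(x₁)) = D(x₁) 1_{x₂ > 0}` is of locally bounded
    -- variation in `x₁`
    (∀ x₂ : ℝ, LocallyBoundedVariationOn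
      (fun x₁ => D x₁ * (if 0 < x₂ then 1 else 0)) univ) := by
    classical
  have hG2 := cd_partial13 G hG
  have hF2 := cd_partial13 F hF
  set H : ℝ × ℝ → ℝ := fun p =>
    deriv (fun y => G p.1 y) p.2 - deriv (fun y => F p.1 y) p.2 with hH
  have hHc : ContDiff ℝ 1 H := hG2.sub hF2
  have hDeq : ∀ x, D x = H (x, b x) := fun x => by rw [hD]
  have hDcont : Continuous D := by
    have hc : Continuous fun x => H (x, b x) :=
      hHc.continuous.comp (continuous_id.prodMk hb)
    have heq : D = fun x => H (x, b x) := funext hDeq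
    rwa [heq]
  have hDlbv : LocallyBoundedVariationOn D univ :=
    lbv_comp13 b b1 hb hb1 hb1bdd H hHc D hDeq
  -- integrability of weighted indicators
  have hint : ∀ (w : ℝ → ℝ), Continuous w → ∀ (t a₁ a₂ : ℝ),
      IntervalIntegrable (fun y => w y * (if b y < t then 1 else 0)) volume a₁ a₂ := by
    intro w hw t a₁ a₂
    apply IntervalIntegrable.mono_fun ((hw.abs).intervalIntegrable a₁ a₂)
    · exact ((hw.measurable.mul (Measurable.ite
        (measurableSet_lt hb.measurable measurable_const) measurable_const
        measurable_const))).aestronglyMeasurable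
    · filter_upwards with y
      simp only [Real.norm_eq_abs, abs_mul, abs_abs]
      split_ifs <;> simp [abs_of_nonneg]
  have hmono_pt : ∀ (w : ℝ → ℝ), (∀ y, 0 ≤ w y) → ∀ (u v : ℝ), u ≤ v → ∀ y : ℝ,
      w y * (if b y < u then 1 else 0) ≤ w y * (if b y < v then 1 else 0) := by
    intro w hw u v huv y
    split_ifs with h1 h2 h2
    · exact le_rfl
    · exact absurd (lt_of_lt_of_le h1 huv) h2
    · exact mul_le_mul_of_nonneg_left (by norm_num) (hw y)
    · exact le_rfl
  refine ⟨hDlbv, ?_, ?_, ?_, ?_, ?_, ?_⟩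
  · -- (b1) : left derivative in x₂
    intro x₁ x₂
    rw [hasDerivWithinAt_iff_tendsto_slope' (notMem_Iio.2 le_rfl)]
    set Fq : ℝ → ℝ → ℝ := fun z y =>
      D y * ((max (z - b y) 0 - max (x₂ - b y) 0) / (z - x₂)) with hFq
    have hcont : ∀ z : ℝ, Continuous (Fq z) := fun z =>
      hDcont.mul ((((continuous_const.sub hb).max continuous_const).sub
        ((continuous_const.sub hb).max continuous_const)).div_const _)
    have hintc : ∀ z : ℝ,
        IntervalIntegrable (fun y => D y * max (z - b y) 0) volume 0 x₁ :=
      fun z => (hDcont.mul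
        ((continuous_const.sub hb).max continuous_const)).intervalIntegrable _ _
    have hslope : ∀ᶠ z in 𝓝[Iio x₂] x₂,
        (∫ y in (0 : ℝ)..x₁, Fq z y) = slope (fun z => fv x₁ z) x₂ z := by
      filter_upwards [self_mem_nhdsWithin] with z hz
      rw [slope_def_field, hfv, hfv, ← intervalIntegral.integral_sub (hintc z) (hintc x₂),
        ← intervalIntegral.integral_div]
      congr 1
      funext y
      rw [← mul_sub, mul_div_assoc]
    have key : Tendsto (fun z => ∫ y in (0 : ℝ)..x₁, Fq z y) (𝓝[Iio x₂] x₂)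
        (𝓝 (∫ y in (0 : ℝ)..x₁, D y * (if b y < x₂ then 1 else 0))) := by
      apply intervalIntegral.tendsto_integral_filter_of_dominated_convergence
        (bound := fun y => |D y|)
      · exact Eventually.of_forall fun z => (hcont z).aestronglyMeasurable
      · filter_upwards [self_mem_nhdsWithin] with z hz
        apply ae_of_all
        intro y _
        have h1 : |max (z - b y) 0 - max (x₂ - b y) 0| ≤ |z - x₂| := by
          have := abs_max_sub_max_le_abs (z - b y) (x₂ - b y) 0
          rwa [show z - b y - (x₂ - b y) = z - x₂ by ring] at this
        have h2 : |(max (z - b y) 0 - max (x₂ - b y) 0) / (z - x₂)| ≤ 1 := by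
          rw [abs_div]
          exact div_le_one_of_le₀ h1 (abs_nonneg _)
        calc ‖Fq z y‖
            = |D y| * |(max (z - b y) 0 - max (x₂ - b y) 0) / (z - x₂)| := by
              rw [hFq]; exact abs_mul _ _
          _ ≤ |D y| * 1 := mul_le_mul_of_nonneg_left h2 (abs_nonneg _)
          _ = |D y| := mul_one _
      · exact hDcont.abs.intervalIntegrable _ _
      · apply ae_of_all
        intro y _
        rcases lt_or_ge (b y) x₂ with hlt | hle
        · have hev : ∀ᶠ z in 𝓝[Iio x₂] x₂, Fq z y = D y * 1 := by
            filter_upwards [nhdsWithin_le_nhds (Ioi_mem_nhds hlt), self_mem_nhdsWithin]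
              with z hz1 hz2
            simp only [hFq]
            rw [max_eq_left (sub_nonneg.2 (le_of_lt hz1)),
              max_eq_left (sub_nonneg.2 (le_of_lt hlt)),
              show z - b y - (x₂ - b y) = z - x₂ by ring,
              div_self (sub_ne_zero.2 (ne_of_lt hz2))]
          rw [if_pos hlt]
          exact Tendsto.congr' (hev.mono fun z h => h.symm) tendsto_const_nhds
        · have hev : ∀ᶠ z in 𝓝[Iio x₂] x₂, Fq z y = D y * 0 := by
            filter_upwards [self_mem_nhdsWithin] with z hz
            simp only [hFq]
            rw [max_eq_right (by simp only [mem_Iio] at hz; linarith),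
              max_eq_right (by linarith)]
            simp
          rw [if_neg (not_lt.2 hle)]
          exact Tendsto.congr' (hev.mono fun z h => h.symm) tendsto_const_nhds
    exact Tendsto.congr' hslope key
  · -- (b2) : left derivative in x₁
    intro x₁ x₂
    set φ : ℝ → ℝ := fun y => D y * max (x₂ + b x₁ - b y) 0 with hφ
    have hφc : Continuous φ := hDcont.mul ((continuous_const.sub hb).max continuous_const)
    have h : HasDerivAt (fun u => ∫ y in (0 : ℝ)..u, φ y) (φ x₁) x₁ :=
      intervalIntegral.integral_hasDerivAt_right (hφc.intervalIntegrable _ _)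
        (hφc.stronglyMeasurableAtFilter _ _) hφc.continuousAt
    have heq : (fun u => fv u (x₂ + b x₁)) = fun u => ∫ y in (0 : ℝ)..u, φ y := by
      funext u; rw [hfv]
    have hval : φ x₁ = D x₁ * max x₂ 0 := by simp [hφ]
    rw [heq, ← hval]
    exact h.hasDerivWithinAt
  · -- (b3)
    intro x₁
    have key3 : ∀ (w : ℝ → ℝ), Continuous w → (∀ y, 0 ≤ w y) →
        LocallyBoundedVariationOn
          (fun x₂ => ∫ y in (0 : ℝ)..x₁, w y * (if b y < x₂ + b x₁ then 1 else 0))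
          univ := by
      intro w hw hw0
      rcases le_total 0 x₁ with h01 | h01
      · have hmono : Monotone
            (fun x₂ => ∫ y in (0 : ℝ)..x₁, w y * (if b y < x₂ + b x₁ then 1 else 0)) := by
          intro u v huv
          exact intervalIntegral.integral_mono_on h01 (hint w hw _ _ _) (hint w hw _ _ _)
            (fun y _ => hmono_pt w hw0 _ _ (by linarith) y)
        exact (hmono.monotoneOn univ).locallyBoundedVariationOn
      · have hanti : Antitone
            (fun x₂ => ∫ y in (0 : ℝ)..x₁, w y * (if b y < x₂ + b x₁ then 1 else 0)) := by
          intro u v huv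
          simp only
          rw [intervalIntegral.integral_symm x₁ 0, intervalIntegral.integral_symm x₁ 0]
          apply neg_le_neg
          exact intervalIntegral.integral_mono_on h01 (hint w hw _ _ _) (hint w hw _ _ _)
            (fun y _ => hmono_pt w hw0 _ _ (by linarith) y)
        exact lbv_of_antitone13 hanti
    have heq : (fun x₂ => ∫ y in (0 : ℝ)..x₁, D y * (if b y < x₂ + b x₁ then 1 else 0))
        = fun x₂ =>
          (∫ y in (0 : ℝ)..x₁, max (D y) 0 * (if b y < x₂ + b x₁ then 1 else 0))
          - ∫ y in (0 : ℝ)..x₁, max (-D y) 0 * (if b y < x₂ + b x₁ then 1 else 0) := by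
      funext x₂
      rw [← intervalIntegral.integral_sub (hint (fun y => max (D y) 0) (hDcont.max continuous_const) _ _ _)
        (hint (fun y => max (-D y) 0) (hDcont.neg.max continuous_const) _ _ _)]
      congr 1
      funext y
      rw [← sub_mul, max_zero_sub_max_neg_zero_eq_self]
    rw [heq]
    exact lbv_sub13 (key3 _ (hDcont.max continuous_const) (fun y => le_max_right _ _))
      (key3 _ (hDcont.neg.max continuous_const) (fun y => le_max_right _ _))
  · -- (b4)
    intro x₁
    rcases le_total 0 (D x₁) with h | h
    · have hm : Monotone fun x₂ : ℝ => D x₁ * (if 0 < x₂ then 1 else 0) := by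
        intro u v huv
        apply mul_le_mul_of_nonneg_left _ h
        split_ifs with h1 h2 h2 <;>
          first
            | exact le_rfl
            | exact absurd (lt_of_lt_of_le h1 huv) h2
            | norm_num
      exact (hm.monotoneOn univ).locallyBoundedVariationOn
    · have ha : Antitone fun x₂ : ℝ => D x₁ * (if 0 < x₂ then 1 else 0) := by
        intro u v huv
        apply mul_le_mul_of_nonpos_left _ h
        split_ifs with h1 h2 h2 <;>
          first
            | exact le_rfl
            | exact absurd (lt_of_lt_of_le h1 huv) h2
            | norm_num
      exact lbv_of_antitone13 ha
  · -- (b5)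
    intro x₂
    exact lbv_mul_const13 _ hDlbv
  · -- (b6)
    intro x₂
    exact lbv_mul_const13 _ hDlbv
end
end

section
/- Let u:ℝ→ℝ be left continuous and of locally bounded variation, and majorized so that its variation on the relevant compact set is finite. Let ρ be the smooth probability density supported in (0,2), ρ_n(x)=nρ(nx), and let u_n(x) = ∫ρ_n(x−y)u(y)dy = ∫₀²ρ(z)u(x−z/n)dz be the mollification of u (so u_n is C^∞). Then for every càdlàg function g:ℝ→ℝ with compact support, lim_{n→∞} ∫_{−∞}^{+∞} g(x) u_n'(x) dx = ∫_{−∞}^{+∞} g(x) d_x u(x), where the right-hand side is the Lebesgue–Stieltjes integral of g against the signed measure generated by u. -/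
open MeasureTheory Filter Set

noncomputable section

open MeasureTheory Filter Set GIF

/-- The mollifier `ρ(x) = c exp(1/((x-1)²-1))` on `(0,2)`. -/
noncomputable def rho (c : ℝ) : ℝ → ℝ := fun x =>
  if 0 < x ∧ x < 2 then c * Real.exp (1 / ((x - 1) ^ 2 - 1)) else 0

lemma rho_eq (c : ℝ) : rho c = fun x => c * expNegInvGlue (1 - (x-1)^2) := by
  funext x
  unfold rho expNegInvGlue
  by_cases h : 0 < x ∧ x < 2
  · have h1 : (0:ℝ) < 1 - (x-1)^2 := by nlinarith [h.1, h.2]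
    rw [if_pos h, if_neg (not_le.2 h1)]
    congr 1
    rw [one_div, neg_inv]
    norm_num
  · have h1 : 1 - (x-1)^2 ≤ 0 := by
      rcases not_and_or.mp h with h' | h'
      · push_neg at h'; nlinarith
      · push_neg at h'; nlinarith
    rw [if_neg h, if_pos h1, mul_zero]

lemma rho_cont (c : ℝ) : Continuous (rho c) := by
  rw [rho_eq]
  exact continuous_const.mul ((expNegInvGlue.contDiff (n := 0)).continuous.comp (by continuity))

lemma rho_zero_outside {c x : ℝ} (h : x ≤ 0 ∨ 2 ≤ x) : rho c x = 0 := by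
  unfold rho
  rw [if_neg]
  rcases h with h | h
  · exact fun hx => absurd h (not_le.2 hx.1)
  · exact fun hx => absurd h (not_le.2 hx.2)

lemma rho_nonneg {c : ℝ} (hc : 0 ≤ c) (x : ℝ) : 0 ≤ rho c x := by
  rw [rho_eq]
  exact mul_nonneg hc (expNegInvGlue.nonneg _)

lemma expNegInvGlue_le_one (x : ℝ) : expNegInvGlue x ≤ 1 := by
  unfold expNegInvGlue
  split
  · norm_num
  · next h =>
    rw [not_le] at h
    rw [Real.exp_le_one_iff]
    simp [inv_nonneg.2 h.le]

lemma rho_le {c : ℝ} (hc : 0 ≤ c) (x : ℝ) : rho c x ≤ c := by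
  rw [rho_eq]
  calc c * expNegInvGlue (1 - (x-1)^2) ≤ c * 1 :=
        mul_le_mul_of_nonneg_left (expNegInvGlue_le_one _) hc
    _ = c := mul_one c

lemma c_pos {c : ℝ} (hc : (∫ x in (0:ℝ)..2, rho c x) = 1) : 0 < c := by
  rcases lt_trichotomy c 0 with h | h | h
  · exfalso
    have hneg : ∀ x : ℝ, rho c x ≤ 0 := by
      intro x
      rw [rho_eq]
      exact mul_nonpos_of_nonpos_of_nonneg h.le (expNegInvGlue.nonneg _)
    have : (∫ x in (0:ℝ)..2, rho c x) ≤ 0 := by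
      rw [intervalIntegral.integral_of_le (by norm_num)]
      exact setIntegral_nonpos measurableSet_Ioc (fun x _ => hneg x)
    linarith [hc ▸ this]
  · exfalso
    have : (∫ x in (0:ℝ)..2, rho c x) = 0 := by
      have : rho c = fun _ => 0 := by
        funext x; rw [rho_eq, h]; simp
      rw [this]; simp
    rw [hc] at this; norm_num at this
  · exact h

noncomputable def Phi (c : ℝ) (t : ℝ) : ℝ := ∫ z in (0:ℝ)..t, rho c z

lemma rho_intble (c a b : ℝ) : IntervalIntegrable (rho c) volume a b :=
  (rho_cont c).intervalIntegrable a b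

lemma hasDerivAt_Phi (c t : ℝ) : HasDerivAt (Phi c) (rho c t) t :=
  intervalIntegral.integral_hasDerivAt_right (rho_intble c 0 t)
    ((rho_cont c).stronglyMeasurable.stronglyMeasurableAtFilter)
    (rho_cont c).continuousAt

lemma Phi_of_nonpos {c t : ℝ} (ht : t ≤ 0) : Phi c t = 0 := by
  unfold Phi
  rw [intervalIntegral.integral_congr (g := fun _ => 0) ?_, intervalIntegral.integral_zero]
  intro x hx
  rw [uIcc_comm, uIcc_of_le ht] at hx
  exact rho_zero_outside (Or.inl hx.2)

lemma Phi_of_ge {c : ℝ} (hc : (∫ x in (0:ℝ)..2, rho c x) = 1) {t : ℝ} (ht : 2 ≤ t) :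
    Phi c t = 1 := by
  unfold Phi
  rw [← intervalIntegral.integral_add_adjacent_intervals (b := 2) (rho_intble c 0 2)
    (rho_intble c 2 t), hc]
  have : (∫ x in (2:ℝ)..t, rho c x) = 0 := by
    rw [intervalIntegral.integral_congr (g := fun _ => 0) ?_, intervalIntegral.integral_zero]
    intro x hx
    rw [uIcc_of_le ht] at hx
    exact rho_zero_outside (Or.inr hx.1)
  rw [this, add_zero]

lemma Phi_mono {c : ℝ} (hc : 0 ≤ c) : Monotone (Phi c) := by
  intro s t hst
  have : Phi c t - Phi c s = ∫ z in s..t, rho c z := by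
    unfold Phi
    rw [← intervalIntegral.integral_add_adjacent_intervals (b := s) (rho_intble c 0 s)
      (rho_intble c s t)]
    ring
  nlinarith [intervalIntegral.integral_nonneg (μ := volume) hst (fun u _ => rho_nonneg hc u),
    this]

lemma Phi_nonneg {c : ℝ} (hc : 0 ≤ c) (t : ℝ) : 0 ≤ Phi c t := by
  rcases le_or_gt t 0 with h | h
  · exact (Phi_of_nonpos h).ge
  · have := Phi_mono hc h.le
    rwa [Phi_of_nonpos (le_refl (0:ℝ))] at this

lemma Phi_le_one {c : ℝ} (hc0 : 0 ≤ c) (hc : (∫ x in (0:ℝ)..2, rho c x) = 1) (t : ℝ) :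
    Phi c t ≤ 1 := by
  rcases le_or_gt t 2 with h | h
  · have := Phi_mono hc0 h
    rwa [Phi_of_ge hc (le_refl (2:ℝ))] at this
  · exact (Phi_of_ge hc h.le).le

lemma integral_rho (c : ℝ) (hc : (∫ x in (0:ℝ)..2, rho c x) = 1) :
    (∫ z : ℝ, rho c z) = 1 := by
  rw [← setIntegral_eq_integral_of_forall_compl_eq_zero (s := Ioc (0:ℝ) 2) ?_]
  · rw [← intervalIntegral.integral_of_le (by norm_num : (0:ℝ) ≤ 2)]
    exact hc
  · intro x hx
    rw [mem_Ioc, not_and_or] at hx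
    push_neg at hx
    rcases hx with h | h
    · exact rho_zero_outside (Or.inl h)
    · exact rho_zero_outside (Or.inr h.le)

lemma indicator_integral_eq_Phi (c : ℝ) (hc : (∫ x in (0:ℝ)..2, rho c x) = 1) (s : ℝ) :
    (∫ z in Ioc (0:ℝ) 2, (Iio s).indicator (rho c) z) = Phi c s := by
  rw [setIntegral_indicator measurableSet_Iio]
  rcases le_or_gt s 0 with h | h
  · have : Ioc (0:ℝ) 2 ∩ Iio s = ∅ := by
      ext x; simp only [mem_inter_iff, mem_Ioc, mem_Iio, mem_empty_iff_false, iff_false]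
      rintro ⟨⟨h1, _⟩, h2⟩; linarith
    rw [this, Phi_of_nonpos h]
    simp
  · rcases le_or_gt s 2 with h2 | h2
    · have : Ioc (0:ℝ) 2 ∩ Iio s = Ioo 0 s := by
        ext x; simp only [mem_inter_iff, mem_Ioc, mem_Iio, mem_Ioo]
        constructor
        · rintro ⟨⟨h1, _⟩, h3⟩; exact ⟨h1, h3⟩
        · rintro ⟨h1, h3⟩; exact ⟨⟨h1, by linarith⟩, h3⟩
      rw [this, ← integral_Ioc_eq_integral_Ioo, ← intervalIntegral.integral_of_le h.le]
      rfl
    · have : Ioc (0:ℝ) 2 ∩ Iio s = Ioc 0 2 := by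
        rw [inter_eq_left]
        intro x hx; exact lt_of_le_of_lt hx.2 h2
      rw [this, ← intervalIntegral.integral_of_le (by norm_num : (0:ℝ) ≤ 2), hc,
        Phi_of_ge hc h2.le]

open scoped Topology in
lemma measurable_of_right_cts {g : ℝ → ℝ} (hg : ∀ x : ℝ, ContinuousWithinAt g (Ici x) x) :
    Measurable g := by
  have happ : ∀ n : ℕ, Measurable fun x : ℝ => g ((⌈x * (n+1 : ℝ)⌉ : ℝ) / (n+1 : ℝ)) := by
    intro n
    have h1 : Measurable fun x : ℝ => (⌈x * (n+1 : ℝ)⌉ : ℤ) :=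
      (measurable_id.mul_const _).ceil
    exact (measurable_of_countable (fun k : ℤ => g ((k : ℝ) / (n+1 : ℝ)))).comp h1
  apply measurable_of_tendsto_metrizable happ
  rw [tendsto_pi_nhds]
  intro x
  have hm : ∀ n : ℕ, (0:ℝ) < (n+1 : ℝ) := fun n => by positivity
  have hy_ge : ∀ n : ℕ, x ≤ (⌈x * (n+1 : ℝ)⌉ : ℝ) / (n+1 : ℝ) := by
    intro n
    rw [le_div_iff₀ (hm n)]
    exact Int.le_ceil _
  have hy_lt : ∀ n : ℕ, (⌈x * (n+1 : ℝ)⌉ : ℝ) / (n+1 : ℝ) ≤ x + 1 / (n+1 : ℝ) := by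
    intro n
    rw [div_le_iff₀ (hm n)]
    have := (Int.ceil_lt_add_one (x * (n+1 : ℝ))).le
    calc ((⌈x * (n+1 : ℝ)⌉ : ℝ)) ≤ x * (n+1 : ℝ) + 1 := this
      _ = (x + 1 / (n+1 : ℝ)) * (n+1 : ℝ) := by field_simp
  have hy_tendsto : Tendsto (fun n : ℕ => (⌈x * (n+1 : ℝ)⌉ : ℝ) / (n+1 : ℝ)) atTop
      (𝓝[Ici x] x) := by
    apply tendsto_nhdsWithin_of_tendsto_nhds_of_eventually_within
    · apply tendsto_of_tendsto_of_tendsto_of_le_of_le (g := fun _ : ℕ => x)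
        (h := fun n : ℕ => x + 1 / (n+1 : ℝ)) tendsto_const_nhds ?_ hy_ge hy_lt
      have : Tendsto (fun n : ℕ => 1 / (n+1 : ℝ)) atTop (𝓝 0) :=
        tendsto_one_div_add_atTop_nhds_zero_nat
      simpa using tendsto_const_nhds.add this
    · exact Eventually.of_forall fun n => hy_ge n
  exact (hg x).tendsto.comp hy_tendsto

open scoped Topology in
lemma bounded_of_cadlag_cpt {g : ℝ → ℝ}
    (hr : ∀ x : ℝ, ContinuousWithinAt g (Ici x) x)
    (hl : ∀ x : ℝ, ∃ l : ℝ, Tendsto g (𝓝[Iio x] x) (𝓝 l))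
    (hs : HasCompactSupport g) :
    ∃ M : ℝ, ∀ x : ℝ, |g x| ≤ M := by
  have key : ∀ x : ℝ, ∃ Mx : ℝ, ∀ᶠ y in 𝓝 x, |g y| ≤ Mx := by
    intro x
    obtain ⟨l, hlx⟩ := hl x
    have h1 : ∀ᶠ y in 𝓝[Ici x] x, |g y| ≤ |g x| + 1 := by
      filter_upwards [(hr x).tendsto (Metric.ball_mem_nhds (g x) one_pos)] with y hy
      rw [mem_preimage, Metric.mem_ball, Real.dist_eq] at hy
      calc |g y| = |g x + (g y - g x)| := by ring_nf
        _ ≤ |g x| + |g y - g x| := abs_add_le _ _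
        _ ≤ |g x| + 1 := by linarith [hy.le]
    have h2 : ∀ᶠ y in 𝓝[Iio x] x, |g y| ≤ |l| + 1 := by
      filter_upwards [hlx (Metric.ball_mem_nhds l one_pos)] with y hy
      rw [mem_preimage, Metric.mem_ball, Real.dist_eq] at hy
      calc |g y| = |l + (g y - l)| := by ring_nf
        _ ≤ |l| + |g y - l| := abs_add_le _ _
        _ ≤ |l| + 1 := by linarith [hy.le]
    refine ⟨max (|g x| + 1) (|l| + 1), ?_⟩
    have : 𝓝 (x : ℝ) = 𝓝[Iio x] x ⊔ 𝓝[Ici x] x := (nhdsLT_sup_nhdsGE x).symm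
    rw [this, eventually_sup]
    constructor
    · filter_upwards [h2] with y hy using hy.trans (le_max_right _ _)
    · filter_upwards [h1] with y hy using hy.trans (le_max_left _ _)
  choose Mx hMx using key
  have hU : ∀ x : ℝ, ∃ U : Set ℝ, IsOpen U ∧ x ∈ U ∧ ∀ y ∈ U, |g y| ≤ Mx x := by
    intro x
    obtain ⟨U, hUx, hUo, hUb⟩ := eventually_nhds_iff.mp (hMx x)
    exact ⟨U, hUo, hUb, hUx⟩
  choose U hUo hUx hUb using hU
  obtain ⟨t, -, ht⟩ := (hs : IsCompact (tsupport g)).elim_nhds_subcover U (fun x _ => (hUo x).mem_nhds (hUx x))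
  refine ⟨∑ x ∈ t, |Mx x|, fun y => ?_⟩
  by_cases hy : y ∈ tsupport g
  · obtain ⟨x, hxt, hyx⟩ := mem_iUnion₂.mp (ht hy)
    calc |g y| ≤ Mx x := hUb x y hyx
      _ ≤ |Mx x| := le_abs_self _
      _ ≤ ∑ x ∈ t, |Mx x| := Finset.single_le_sum (fun i _ => abs_nonneg (Mx i)) hxt
  · rw [image_eq_zero_of_notMem_tsupport hy, abs_zero]
    exact Finset.sum_nonneg fun i _ => abs_nonneg (Mx i)

lemma Phi_cont (c : ℝ) : Continuous (Phi c) := by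
  have : Differentiable ℝ (Phi c) := fun t => (hasDerivAt_Phi c t).differentiableAt
  exact this.continuous

lemma hasDerivAt_int_Phi {c : ℝ} (hc0 : 0 ≤ c)
    (hc : (∫ x in (0:ℝ)..2, rho c x) = 1)
    (μ : Measure ℝ) [IsFiniteMeasure μ] (m : ℝ) (x : ℝ) :
    HasDerivAt (fun x' => ∫ y, Phi c (m * (x' - y)) ∂μ)
      (∫ y, m * rho c (m * (x - y)) ∂μ) x := by
  have key := hasDerivAt_integral_of_dominated_loc_of_deriv_le (s := Metric.ball x 1) (Metric.ball_mem_nhds x one_pos)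
    (F := fun x' y => Phi c (m * (x' - y))) (F' := fun x' y => m * rho c (m * (x' - y)))
    (bound := fun _ => |m| * c) (μ := μ) (x₀ := x) ?_ ?_ ?_ ?_ ?_ ?_
  · exact key.2
  · exact Eventually.of_forall fun x' =>
      (((Phi_cont c).comp (by continuity)).aestronglyMeasurable)
  · refine (integrable_const (1:ℝ)).mono'
      (((Phi_cont c).comp (by continuity)).aestronglyMeasurable) ?_
    refine Eventually.of_forall fun y => ?_
    rw [Real.norm_eq_abs, abs_le]
    exact ⟨by linarith [Phi_nonneg hc0 (m*(x-y))], Phi_le_one hc0 hc _⟩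
  · exact (continuous_const.mul ((rho_cont c).comp (by continuity))).aestronglyMeasurable
  · refine Eventually.of_forall fun y => fun x' _ => ?_
    rw [Real.norm_eq_abs, abs_mul]
    exact mul_le_mul_of_nonneg_left
      (by rw [abs_of_nonneg (rho_nonneg hc0 _)]; exact rho_le hc0 _) (abs_nonneg m)
  · exact integrable_const _
  · refine Eventually.of_forall fun y => fun x' _ => ?_
    have h1 : HasDerivAt (fun x'' : ℝ => m * (x'' - y)) m x' := by
      simpa using ((hasDerivAt_id x').sub_const y).const_mul m
    simpa [mul_comm, Function.comp_def] using (hasDerivAt_Phi c (m * (x' - y))).comp x' h1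

lemma fubini_one {c : ℝ} (hc0 : 0 ≤ c) (hc : (∫ x in (0:ℝ)..2, rho c x) = 1)
    (μ : Measure ℝ) [IsFiniteMeasure μ] {m : ℝ} (hm : 0 < m) (x : ℝ) :
    (∫ z in (0:ℝ)..2, rho c z * (μ (Iio (x - z / m))).toReal)
      = ∫ y, Phi c (m * (x - y)) ∂μ := by
  have hS : MeasurableSet {p : ℝ × ℝ | p.2 < x - p.1 / m} :=
    measurableSet_lt measurable_snd (measurable_const.sub (measurable_fst.div_const m))
  have hind : ∀ z : ℝ, (μ (Iio (x - z / m))).toReal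
      = ∫ y, (if y < x - z / m then (1:ℝ) else 0) ∂μ := by
    intro z
    rw [← measureReal_def, ← integral_indicator_one measurableSet_Iio]
    refine integral_congr_ae (Eventually.of_forall fun y => ?_)
    simp [Set.indicator_apply, Set.mem_Iio]
  simp only [hind]
  rw [intervalIntegral.integral_of_le (by norm_num : (0:ℝ) ≤ 2)]
  have hint : Integrable (Function.uncurry fun z y =>
      rho c z * (if y < x - z / m then (1:ℝ) else 0))
      ((volume.restrict (Ioc (0:ℝ) 2)).prod μ) := by
    constructor
    · exact (((rho_cont c).measurable.comp measurable_fst).mul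
        ((measurable_const.ite hS measurable_const))).aestronglyMeasurable
    · apply MeasureTheory.HasFiniteIntegral.of_bounded (C := c)
      refine Eventually.of_forall fun p => ?_
      rw [Function.uncurry_apply_pair, Real.norm_eq_abs, abs_mul,
        abs_of_nonneg (rho_nonneg hc0 _)]
      split
      · simpa using rho_le hc0 p.1
      · simpa using hc0
  have hswap := MeasureTheory.integral_integral_swap hint
  simp only [MeasureTheory.integral_const_mul] at hswap
  rw [hswap]
  refine integral_congr_ae (Eventually.of_forall fun y => ?_)
  have hpt : ∀ z : ℝ, rho c z * (if y < x - z / m then (1:ℝ) else 0)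
      = (Iio (m * (x - y))).indicator (rho c) z := by
    intro z
    rw [Set.indicator_apply]
    have hiff : (y < x - z / m) ↔ z ∈ Iio (m * (x - y)) := by
      simp only [Set.mem_Iio]
      rw [lt_sub_comm, div_lt_iff₀ hm, mul_comm]
    split_ifs with h1 h2
    · exact mul_one _
    · exact absurd (hiff.1 h1) h2
    · next h2 => exact absurd (hiff.2 h2) h1
    · exact mul_zero _
  simp only [hpt]
  exact indicator_integral_eq_Phi c hc (m * (x - y))

lemma rho_hcs (c : ℝ) : HasCompactSupport (rho c) := by
  apply HasCompactSupport.intro (isCompact_Icc (a := (0:ℝ)) (b := 2))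
  intro x hx
  rw [mem_Icc, not_and_or] at hx
  push_neg at hx
  rcases hx with h | h
  · exact rho_zero_outside (Or.inl h.le)
  · exact rho_zero_outside (Or.inr h.le)

lemma rho_integrable (c : ℝ) : Integrable (rho c) :=
  (rho_cont c).integrable_of_hasCompactSupport (rho_hcs c)

lemma cov {c : ℝ} {m : ℝ} (hm : 0 < m) (g : ℝ → ℝ) (hgm : Measurable g) (y : ℝ) :
    (∫ x : ℝ, g x * (m * rho c (m * (x - y)))) = ∫ z : ℝ, g (y + z / m) * rho c z := by
  set F : ℝ → ℝ := fun t => g (y + t) * (m * rho c (m * t)) with hF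
  have h1 : (∫ z : ℝ, g (y + z / m) * rho c z) = (1/m) * ∫ z : ℝ, F (z / m) := by
    rw [← MeasureTheory.integral_const_mul]
    congr 1
    funext z
    rw [hF]
    simp only
    rw [mul_div_cancel₀ _ (ne_of_gt hm)]
    field_simp
  have h2 : (∫ z : ℝ, F (z / m)) = |m| • ∫ t : ℝ, F t :=
    MeasureTheory.Measure.integral_comp_div F m
  have h3 : (∫ t : ℝ, F t) = ∫ x : ℝ, g x * (m * rho c (m * (x - y))) := by
    have := MeasureTheory.integral_add_right_eq_self (μ := volume)
      (fun x : ℝ => g x * (m * rho c (m * (x - y)))) y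
    rw [← this]
    congr 1
    funext t
    rw [hF]
    simp only
    ring_nf
  rw [h1, h2, h3, abs_of_pos hm, smul_eq_mul]
  field_simp
  congr 1; funext x; ring

lemma swap_eq {c : ℝ} (hc0 : 0 ≤ c) (μ : Measure ℝ) [IsFiniteMeasure μ]
    {g : ℝ → ℝ} (hgm : Measurable g) {M K : ℝ} (hgb : ∀ x, |g x| ≤ M)
    (hsupp : ∀ x : ℝ, x ∉ Icc (-K) K → g x = 0)
    {m : ℝ} (hm : 0 < m) :
    (∫ x : ℝ, g x * ∫ y, m * rho c (m * (x - y)) ∂μ)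
      = ∫ y, (∫ z : ℝ, g (y + z / m) * rho c z) ∂μ := by
  -- restrict outer integral to Icc (-K) K
  rw [← setIntegral_eq_integral_of_forall_compl_eq_zero
    (s := Icc (-K) K) (fun x hx => by rw [hsupp x hx, zero_mul])]
  -- pull g inside the inner integral
  have hpull : ∀ x : ℝ, g x * (∫ y, m * rho c (m * (x - y)) ∂μ)
      = ∫ y, g x * (m * rho c (m * (x - y))) ∂μ := fun x =>
    (MeasureTheory.integral_const_mul _ _).symm
  simp only [hpull]
  -- Fubini
  have hint : Integrable (Function.uncurry fun x y => g x * (m * rho c (m * (x - y))))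
      ((volume.restrict (Icc (-K) K)).prod μ) := by
    constructor
    · exact ((hgm.comp measurable_fst).mul (measurable_const.mul
        ((rho_cont c).measurable.comp ((measurable_fst.sub measurable_snd).const_mul m)))
        ).aestronglyMeasurable
    · apply MeasureTheory.HasFiniteIntegral.of_bounded (C := M * (m * c))
      refine Eventually.of_forall fun p => ?_
      rw [Function.uncurry_apply_pair, Real.norm_eq_abs, abs_mul]
      have h1 : |m * rho c (m * (p.1 - p.2))| ≤ m * c := by
        rw [abs_mul, abs_of_pos hm, abs_of_nonneg (rho_nonneg hc0 _)]
        exact mul_le_mul_of_nonneg_left (rho_le hc0 _) hm.le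
      have h2 : (0:ℝ) ≤ M := (abs_nonneg _).trans (hgb 0)
      exact mul_le_mul (hgb p.1) h1 (abs_nonneg _) h2
  have hswap := MeasureTheory.integral_integral_swap hint
  rw [hswap]
  refine integral_congr_ae (Eventually.of_forall fun y => ?_)
  dsimp only
  rw [setIntegral_eq_integral_of_forall_compl_eq_zero
    (s := Icc (-K) K) (fun x hx => by rw [hsupp x hx, zero_mul])]
  exact cov hm g hgm y

lemma integrand_integrable {c : ℝ} (hc0 : 0 ≤ c) {g : ℝ → ℝ} (hgm : Measurable g)
    {M : ℝ} (hgb : ∀ x, |g x| ≤ M) (y : ℝ) (m : ℝ) :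
    Integrable (fun z : ℝ => g (y + z / m) * rho c z) := by
  refine ((rho_integrable c).const_mul M).mono' ?_ ?_
  · exact ((hgm.comp (measurable_const.add (measurable_id.div_const m))).mul
      (rho_cont c).measurable).aestronglyMeasurable
  · refine Eventually.of_forall fun z => ?_
    rw [Real.norm_eq_abs, abs_mul, abs_of_nonneg (rho_nonneg hc0 _)]
    exact mul_le_mul_of_nonneg_right (hgb _) (rho_nonneg hc0 _)

open scoped Topology

lemma tendsto_G {c : ℝ} (hc0 : 0 ≤ c) (hc : (∫ x in (0:ℝ)..2, rho c x) = 1)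
    {g : ℝ → ℝ} (hgm : Measurable g) {M : ℝ} (hgb : ∀ x, |g x| ≤ M)
    (hgr : ∀ x : ℝ, ContinuousWithinAt g (Ici x) x) (y : ℝ) :
    Tendsto (fun n : ℕ => ∫ z : ℝ, g (y + z / (n:ℝ)) * rho c z) atTop (𝓝 (g y)) := by
  have hlim : Tendsto (fun n : ℕ => ∫ z : ℝ, g (y + z / (n:ℝ)) * rho c z) atTop
      (𝓝 (∫ z : ℝ, g y * rho c z)) := by
    apply MeasureTheory.tendsto_integral_of_dominated_convergence
      (bound := fun z => M * rho c z)
    · exact fun n => ((hgm.comp (measurable_const.add (measurable_id.div_const _))).mul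
        (rho_cont c).measurable).aestronglyMeasurable
    · exact (rho_integrable c).const_mul M
    · intro n
      refine Eventually.of_forall fun z => ?_
      rw [Real.norm_eq_abs, abs_mul, abs_of_nonneg (rho_nonneg hc0 _)]
      exact mul_le_mul_of_nonneg_right (hgb _) (rho_nonneg hc0 _)
    · refine Eventually.of_forall fun z => ?_
      rcases lt_or_ge z 0 with hz | hz
      · have h0 : rho c z = 0 := rho_zero_outside (Or.inl hz.le)
        simp only [h0, mul_zero]
        exact tendsto_const_nhds
      · have h1 : Tendsto (fun n : ℕ => y + z / (n:ℝ)) atTop (𝓝[Ici y] y) := by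
          apply tendsto_nhdsWithin_of_tendsto_nhds_of_eventually_within
          · have : Tendsto (fun n : ℕ => z / (n:ℝ)) atTop (𝓝 0) := by
              simpa [div_eq_mul_inv] using
                tendsto_inv_atTop_nhds_zero_nat.const_mul z
            simpa using tendsto_const_nhds.add this
          · refine Eventually.of_forall fun n => ?_
            simp only [mem_Ici, le_add_iff_nonneg_right]
            positivity
        exact (((hgr y).tendsto.comp h1).mul_const (rho c z))
  have hval : (∫ z : ℝ, g y * rho c z) = g y := by
    rw [MeasureTheory.integral_const_mul, integral_rho c hc, mul_one]
  rwa [hval] at hlim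

lemma tendsto_outer {c : ℝ} (hc0 : 0 ≤ c) (hc : (∫ x in (0:ℝ)..2, rho c x) = 1)
    (μ : Measure ℝ) [IsFiniteMeasure μ]
    {g : ℝ → ℝ} (hgm : Measurable g) {M : ℝ} (hgb : ∀ x, |g x| ≤ M)
    (hgr : ∀ x : ℝ, ContinuousWithinAt g (Ici x) x) :
    Tendsto (fun n : ℕ => ∫ y, (∫ z : ℝ, g (y + z / (n:ℝ)) * rho c z) ∂μ) atTop
      (𝓝 (∫ y, g y ∂μ)) := by
  apply MeasureTheory.tendsto_integral_of_dominated_convergence (bound := fun _ => M)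
  · intro n
    apply StronglyMeasurable.aestronglyMeasurable
    apply MeasureTheory.StronglyMeasurable.integral_prod_right
      (f := fun y z => g (y + z / (n:ℝ)) * rho c z)
    exact ((hgm.comp (measurable_fst.add (measurable_snd.div_const _))).mul
      ((rho_cont c).measurable.comp measurable_snd)).stronglyMeasurable
  · exact integrable_const M
  · intro n
    refine Eventually.of_forall fun y => ?_
    rw [Real.norm_eq_abs]
    calc |∫ z : ℝ, g (y + z / (n:ℝ)) * rho c z|
        ≤ ∫ z : ℝ, |g (y + z / (n:ℝ)) * rho c z| := by
          simpa [Real.norm_eq_abs, abs_mul] using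
            MeasureTheory.norm_integral_le_integral_norm (μ := volume)
              (fun z : ℝ => g (y + z / (n:ℝ)) * rho c z)
      _ ≤ ∫ z : ℝ, M * rho c z := by
          apply integral_mono (integrand_integrable hc0 hgm hgb y _).abs
            ((rho_integrable c).const_mul M)
          intro z
          dsimp only
          rw [abs_mul, abs_of_nonneg (rho_nonneg hc0 _)]
          
          exact mul_le_mul_of_nonneg_right (hgb _) (rho_nonneg hc0 _)
      _ = M := by rw [MeasureTheory.integral_const_mul, integral_rho c hc, mul_one]
  · exact Eventually.of_forall fun y => tendsto_G hc0 hc hgm hgb hgr y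

lemma cont_D {c : ℝ} (hc0 : 0 ≤ c) (μ : Measure ℝ) [IsFiniteMeasure μ] (m : ℝ) :
    Continuous fun x : ℝ => ∫ y, m * rho c (m * (x - y)) ∂μ := by
  apply MeasureTheory.continuous_of_dominated (bound := fun _ => |m| * c)
  · intro x
    exact (continuous_const.mul ((rho_cont c).comp (by continuity))).aestronglyMeasurable
  · intro x
    refine Eventually.of_forall fun y => ?_
    rw [Real.norm_eq_abs, abs_mul, abs_of_nonneg (rho_nonneg hc0 _)]
    exact mul_le_mul_of_nonneg_left (rho_le hc0 _) (abs_nonneg m)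
  · exact integrable_const _
  · refine Eventually.of_forall fun y => ?_
    exact continuous_const.mul ((rho_cont c).comp (by continuity))

lemma gD_integrable {c : ℝ} (hc0 : 0 ≤ c) (μ : Measure ℝ) [IsFiniteMeasure μ] (m : ℝ)
    {g : ℝ → ℝ} (hgm : Measurable g) {M K : ℝ} (hgb : ∀ x, |g x| ≤ M)
    (hsupp : ∀ x : ℝ, x ∉ Icc (-K) K → g x = 0) :
    Integrable (fun x : ℝ => g x * ∫ y, m * rho c (m * (x - y)) ∂μ) := by
  have hDb : ∀ x : ℝ, ‖∫ y, m * rho c (m * (x - y)) ∂μ‖ ≤ |m| * c * (μ univ).toReal := by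
    intro x
    apply MeasureTheory.norm_integral_le_of_norm_le_const
    refine Eventually.of_forall fun y => ?_
    rw [Real.norm_eq_abs, abs_mul, abs_of_nonneg (rho_nonneg hc0 _)]
    exact mul_le_mul_of_nonneg_left (rho_le hc0 _) (abs_nonneg m)
  have hM : (0:ℝ) ≤ M := (abs_nonneg _).trans (hgb 0)
  have hind : (fun x : ℝ => g x * ∫ y, m * rho c (m * (x - y)) ∂μ)
      = (Icc (-K) K).indicator (fun x : ℝ => g x * ∫ y, m * rho c (m * (x - y)) ∂μ) := by
    funext x
    rw [Set.indicator_apply]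
    split_ifs with h
    · rfl
    · rw [hsupp x h, zero_mul]
  rw [hind, integrable_indicator_iff measurableSet_Icc]
  refine (integrable_const (M * (|m| * c * (μ univ).toReal))).mono' ?_ ?_
  · exact (hgm.mul (cont_D hc0 μ m).measurable).aestronglyMeasurable.restrict
  · refine Eventually.of_forall fun x => ?_
    rw [Real.norm_eq_abs, abs_mul]
    exact mul_le_mul (hgb x) (hDb x) (abs_nonneg _) hM

lemma meas_toReal_intble {c : ℝ} (hc0 : 0 ≤ c) (μ : Measure ℝ) [IsFiniteMeasure μ]
    (x : ℝ) {m : ℝ} (hm : 0 < m) :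
    IntervalIntegrable (fun z : ℝ => rho c z * (μ (Iio (x - z / m))).toReal) volume 0 2 := by
  have hanti : Antitone fun z : ℝ => (μ (Iio (x - z / m))).toReal := by
    intro z1 z2 h
    apply ENNReal.toReal_mono (measure_ne_top μ _)
    apply measure_mono (Iio_subset_Iio ?_)
    have : z1 / m ≤ z2 / m := (div_le_div_iff_of_pos_right hm).2 h
    linarith
  apply IntervalIntegrable.mono_fun'
    (g := fun _ : ℝ => c * (μ univ).toReal) intervalIntegrable_const
  · exact ((rho_cont c).measurable.mul hanti.measurable).aestronglyMeasurable
  · refine Eventually.of_forall fun z => ?_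
    dsimp only
    rw [Real.norm_eq_abs, abs_mul, abs_of_nonneg (rho_nonneg hc0 _),
      abs_of_nonneg ENNReal.toReal_nonneg]
    exact mul_le_mul (rho_le hc0 _) (ENNReal.toReal_mono (measure_ne_top μ _)
      (measure_mono (subset_univ _))) ENNReal.toReal_nonneg
      ((rho_nonneg hc0 z).trans (rho_le hc0 z))

lemma key_formula {c : ℝ} (hc0 : 0 ≤ c) (hc : (∫ x in (0:ℝ)..2, rho c x) = 1)
    (μp μm : Measure ℝ) [IsFiniteMeasure μp] [IsFiniteMeasure μm]
    (u : ℝ → ℝ) (A B : ℝ)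
    (hu : ∀ s : ℝ, A ≤ s → s ≤ B → u s = u A + (μp (Iio s)).toReal - (μm (Iio s)).toReal)
    {n : ℕ} (hn : 1 ≤ n) {x : ℝ} (hx : x ∈ Ioo (A + 2) B) :
    (∫ z in (0:ℝ)..2, rho c z * u (x - z / (n:ℝ)))
      = u A + (∫ y, Phi c ((n:ℝ) * (x - y)) ∂μp) - ∫ y, Phi c ((n:ℝ) * (x - y)) ∂μm := by
  have hn0 : (0:ℝ) < (n:ℝ) := Nat.cast_pos.2 hn
  have hn1 : (1:ℝ) ≤ (n:ℝ) := Nat.one_le_cast.2 hn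
  have hxs : ∀ z ∈ Icc (0:ℝ) 2, A ≤ x - z / (n:ℝ) ∧ x - z / (n:ℝ) ≤ B := by
    intro z hz
    have h2 : z / (n:ℝ) ≤ 2 := by
      rw [div_le_iff₀ hn0]
      nlinarith [hz.2]
    have h0 : 0 ≤ z / (n:ℝ) := div_nonneg hz.1 hn0.le
    exact ⟨by nlinarith [hx.1], by nlinarith [hx.2]⟩
  have hcongr : ∀ z ∈ uIcc (0:ℝ) 2,
      rho c z * u (x - z / (n:ℝ))
        = rho c z * u A + (rho c z * (μp (Iio (x - z / (n:ℝ)))).toReal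
          - rho c z * (μm (Iio (x - z / (n:ℝ)))).toReal) := by
    intro z hz
    rw [uIcc_of_le (by norm_num : (0:ℝ) ≤ 2)] at hz
    rw [hu _ (hxs z hz).1 (hxs z hz).2]
    ring
  have hi1 : IntervalIntegrable (fun z : ℝ => rho c z * u A) volume 0 2 :=
    (rho_intble c 0 2).mul_const _
  have hi2 := meas_toReal_intble hc0 μp x hn0
  have hi3 := meas_toReal_intble hc0 μm x hn0
  rw [intervalIntegral.integral_congr hcongr,
    intervalIntegral.integral_add hi1 (hi2.sub hi3),
    intervalIntegral.integral_sub hi2 hi3,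
    intervalIntegral.integral_mul_const, hc, one_mul,
    fubini_one hc0 hc μp hn0 x, fubini_one hc0 hc μm hn0 x]
  ring


/-- Let `u` be left continuous and of locally bounded
variation, generating the signed Lebesgue–Stieltjes measure `κp - κm`
(`(κp-κm)([a,b)) = u(b) - u(a)`), and let `u_n(x) = ∫₀² ρ(z) u(x - z/n) dz` be
its smooth mollifications. Then for every càdlàg `g` with compact support,
`∫ g(x) u_n'(x) dx → ∫ g(x) d_x u(x)` as `n → ∞`. -/
theorem statement_15
    (c : ℝ) (hc : (∫ x in (0 : ℝ)..2, rho c x) = 1)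
    (u : ℝ → ℝ)
    (hu_lc : ∀ x : ℝ, ContinuousWithinAt u (Iic x) x)
    (hu_bv : LocallyBoundedVariationOn u univ)
    -- the signed Lebesgue-Stieltjes measure generated by `u`
    (κp κm : Measure ℝ)
    (hκfin : IsLocallyFiniteMeasure κp ∧ IsLocallyFiniteMeasure κm)
    (hκ : ∀ a b : ℝ, a ≤ b →
      (κp (Ico a b)).toReal - (κm (Ico a b)).toReal = u b - u a)
    -- the mollifications of `u`
    (un : ℕ → ℝ → ℝ)
    (hun : ∀ (n : ℕ) (x : ℝ),
      un n x = ∫ z in (0 : ℝ)..2, rho c z * u (x - z / (n : ℝ))) :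
    ∀ g : ℝ → ℝ,
      -- `g` càdlàg with compact support
      (∀ x : ℝ, ContinuousWithinAt g (Ici x) x) →
      (∀ x : ℝ, ∃ l : ℝ, Tendsto g (nhdsWithin x (Iio x)) (nhds l)) →
      HasCompactSupport g →
      Tendsto (fun n : ℕ => ∫ x : ℝ, g x * deriv (un n) x) atTop
        (nhds ((∫ x : ℝ, g x ∂κp) - ∫ x : ℝ, g x ∂κm)) := by
  intro g hgr hgl hgc
  haveI hlp := hκfin.1
  haveI hlm := hκfin.2
  have hc0 : 0 ≤ c := (c_pos hc).le
  have hgm : Measurable g := measurable_of_right_cts hgr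
  obtain ⟨M, hgb⟩ := bounded_of_cadlag_cpt hgr hgl hgc
  -- compact support inside Icc (-K) K with 0 ≤ K
  obtain ⟨K₀, hK₀⟩ := hgc.isCompact.isBounded.subset_closedBall 0
  set K : ℝ := max K₀ 0 with hKdef
  have hsupp : ∀ x : ℝ, x ∉ Icc (-K) K → g x = 0 := by
    intro x hx
    apply image_eq_zero_of_notMem_tsupport
    intro hmem
    apply hx
    have := hK₀ hmem
    rw [Metric.closedBall, mem_setOf_eq, Real.dist_eq, sub_zero] at this
    have h1 := abs_le.1 this
    constructor
    · calc -K ≤ -K₀ := neg_le_neg (le_max_left _ _)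
        _ ≤ x := h1.1
    · exact h1.2.trans (le_max_left _ _)
  set A : ℝ := -K - 3 with hAdef
  set B : ℝ := K + 1 with hBdef
  set μp : Measure ℝ := κp.restrict (Ico A B) with hμpdef
  set μm : Measure ℝ := κm.restrict (Ico A B) with hμmdef
  haveI hfp : IsFiniteMeasure μp := ⟨by
    rw [hμpdef, Measure.restrict_apply_univ]
    exact lt_of_le_of_lt (measure_mono Ico_subset_Icc_self) isCompact_Icc.measure_lt_top⟩
  haveI hfm : IsFiniteMeasure μm := ⟨by
    rw [hμmdef, Measure.restrict_apply_univ]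
    exact lt_of_le_of_lt (measure_mono Ico_subset_Icc_self) isCompact_Icc.measure_lt_top⟩
  -- the restricted measures of Iio s agree with κ of Ico A s
  have hrestr : ∀ (κ : Measure ℝ) (s : ℝ), s ≤ B →
      (κ.restrict (Ico A B)) (Iio s) = κ (Ico A s) := by
    intro κ s hs
    rw [Measure.restrict_apply measurableSet_Iio]
    congr 1
    ext y
    simp only [mem_inter_iff, mem_Iio, mem_Ico]
    constructor
    · rintro ⟨h1, h2, _⟩; exact ⟨h2, h1⟩
    · rintro ⟨h1, h2⟩; exact ⟨h2, h1, lt_of_lt_of_le h2 hs⟩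
  have hu_eq : ∀ s : ℝ, A ≤ s → s ≤ B →
      u s = u A + (μp (Iio s)).toReal - (μm (Iio s)).toReal := by
    intro s h1 h2
    rw [hμpdef, hμmdef, hrestr κp s h2, hrestr κm s h2]
    have := hκ A s h1
    linarith
  -- derivative formula
  have hDeriv : ∀ n : ℕ, 1 ≤ n → ∀ x ∈ Ioo (A + 2) B,
      deriv (un n) x = (∫ y, (n:ℝ) * rho c ((n:ℝ) * (x - y)) ∂μp)
        - ∫ y, (n:ℝ) * rho c ((n:ℝ) * (x - y)) ∂μm := by
    intro n hn x hx
    have h1 := ((hasDerivAt_int_Phi hc0 hc μp (n:ℝ) x).sub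
      (hasDerivAt_int_Phi hc0 hc μm (n:ℝ) x)).const_add (u A)
    have heq : un n =ᶠ[nhds x] fun x' => u A + ((∫ y, Phi c ((n:ℝ) * (x' - y)) ∂μp)
        - ∫ y, Phi c ((n:ℝ) * (x' - y)) ∂μm) := by
      filter_upwards [isOpen_Ioo.mem_nhds hx] with x' hx'
      rw [hun n x', key_formula hc0 hc μp μm u A B hu_eq hn hx']
      ring
    exact (h1.congr_of_eventuallyEq heq).deriv
  -- pointwise identity including zero outside the support
  have hPoint : ∀ n : ℕ, 1 ≤ n → ∀ x : ℝ,
      g x * deriv (un n) x = g x * ((∫ y, (n:ℝ) * rho c ((n:ℝ) * (x - y)) ∂μp)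
        - ∫ y, (n:ℝ) * rho c ((n:ℝ) * (x - y)) ∂μm) := by
    intro n hn x
    by_cases hgx : g x = 0
    · rw [hgx, zero_mul, zero_mul]
    · have hxK : x ∈ Icc (-K) K := by
        by_contra hxK
        exact hgx (hsupp x hxK)
      have hxI : x ∈ Ioo (A + 2) B := by
        rw [mem_Icc] at hxK
        constructor
        · rw [hAdef]; linarith [hxK.1]
        · rw [hBdef]; linarith [hxK.2]
      rw [hDeriv n hn x hxI]
  -- final limit
  have hIp : (∫ y, g y ∂μp) = ∫ x, g x ∂κp := by
    rw [hμpdef]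
    apply setIntegral_eq_integral_of_forall_compl_eq_zero
    intro x hx
    apply hsupp
    intro hmem
    apply hx
    rw [mem_Icc] at hmem
    rw [mem_Ico]
    constructor
    · rw [hAdef]; linarith [hmem.1]
    · rw [hBdef]; linarith [hmem.2]
  have hIm : (∫ y, g y ∂μm) = ∫ x, g x ∂κm := by
    rw [hμmdef]
    apply setIntegral_eq_integral_of_forall_compl_eq_zero
    intro x hx
    apply hsupp
    intro hmem
    apply hx
    rw [mem_Icc] at hmem
    rw [mem_Ico]
    constructor
    · rw [hAdef]; linarith [hmem.1]
    · rw [hBdef]; linarith [hmem.2]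
  have hfinal := (tendsto_outer hc0 hc μp hgm hgb hgr).sub
    (tendsto_outer hc0 hc μm hgm hgb hgr)
  rw [hIp, hIm] at hfinal
  apply Tendsto.congr' ?_ hfinal
  filter_upwards [eventually_ge_atTop 1] with n hn
  have hn0 : (0:ℝ) < (n:ℝ) := Nat.cast_pos.2 hn
  rw [← swap_eq hc0 μp hgm hgb hsupp hn0, ← swap_eq hc0 μm hgm hgb hsupp hn0]
  rw [← MeasureTheory.integral_sub
    (gD_integrable hc0 μp (n:ℝ) hgm hgb hsupp)
    (gD_integrable hc0 μm (n:ℝ) hgm hgb hsupp)]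
  refine integral_congr_ae (Eventually.of_forall fun x => ?_)
  dsimp only
  rw [← mul_sub, ← hPoint n hn x]
end
end
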